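/- arXiv:2203.14460 — 2 statements merged into one kernel-verified Lean document; each statement's English description precedes it below -/
import Mathlib

section
/- Let $n \geq 1$ and let $r_1 \in S_{2n+2}$ be the cycle $(1\ 2\ 3\ \cdots\ 2n+2)$. Then the group $W_{2n+2}$ is generated by the transpositions $(i\ i+2)$ for $1 \leq i \leq 2n$ together with $r_1$. -/
/-- Indices `0,…,2n+1` of `Fin (2n+2)` correspond to the numbers `1,…,2n+2`;
`Bo` is the set corresponding to the odd numbers `1,3,…,2n+1`. -/
def Bo (n : ℕ) : Set (Fin (2*n+2)) := {x | (x : ℕ) % 2 = 0}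

/-- `Be` is the set corresponding to the even numbers `2,4,…,2n+2`. -/
def Be (n : ℕ) : Set (Fin (2*n+2)) := {x | (x : ℕ) % 2 = 1}

/-!
The transpositions `(i i+2)` chain together to every transposition of two numbers of equal
parity. A group generated by transpositions contains every permutation that moves each point
within its orbit, so they generate all parity-preserving permutations, i.e. the elements of `W`
fixing `B_o`. A parity-reversing permutation becomes parity-preserving after composing with the
parity-reversing `r₁`.
-/

open Equiv Subgroup

def stepSwaps (m k : ℕ) : Set (Perm (Fin m)) :=
  {τ | ∃ j : ℕ, ∃ h : j + k < m, τ = swap ⟨j, by omega⟩ ⟨j + k, h⟩}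

theorem val_mod_eq_of_mem_stepSwaps {m k : ℕ} {τ : Perm (Fin m)} (hτ : τ ∈ stepSwaps m k)
    (x : Fin m) : (τ x : ℕ) % k = x % k := by
  obtain ⟨j, hj, rfl⟩ := hτ
  rw [swap_apply_def]
  split_ifs with h₁ h₂
  · simp [h₁]
  · simp [h₂]
  · rfl

theorem isSwap_of_mem_stepSwaps {m k : ℕ} (hk : 0 < k) {τ : Perm (Fin m)}
    (hτ : τ ∈ stepSwaps m k) : τ.IsSwap := by
  obtain ⟨j, hj, rfl⟩ := hτ
  exact ⟨_, _, by simp [Fin.ext_iff]; omega, rfl⟩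

theorem swap_mem_closure_stepSwaps {m k : ℕ} {a b : Fin m} (hab : (a : ℕ) % k = b % k) :
    swap a b ∈ closure (stepSwaps m k) := by
  wlog hle : (a : ℕ) ≤ b generalizing a b
  · rw [swap_comm]
    exact this hab.symm (by omega)
  obtain ⟨d, hd⟩ := (Nat.modEq_iff_dvd' hle).1 hab
  clear hab
  induction d generalizing b with
  | zero =>
    rw [show b = a by ext; simp at hd; omega, swap_self]
    exact one_mem _
  | succ d ih =>
    rw [Nat.mul_succ] at hd
    let c : Fin m := ⟨b - k, by omega⟩
    have hcb : swap c b ∈ stepSwaps m k := ⟨b - k, by omega, by congr; ext; simp; omega⟩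
    have hac : swap a c ∈ closure (stepSwaps m k) :=
      ih (b := c) (by simp [c]; omega) (by simp [c]; omega)
    exact SubmonoidClass.swap_mem_trans _ hac (subset_closure hcb)

theorem mem_closure_stepSwaps_of_val_mod_eq {m k : ℕ} (hk : 0 < k) {σ : Perm (Fin m)}
    (hσ : ∀ x, (σ x : ℕ) % k = x % k) : σ ∈ closure (stepSwaps m k) := by
  have hswap : ∀ τ ∈ stepSwaps m k, τ.IsSwap := fun _ => isSwap_of_mem_stepSwaps hk
  rw [mem_closure_isSwap hswap]
  refine ⟨Set.toFinite _, fun x => ?_⟩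
  rw [← swap_mem_closure_isSwap hswap]
  exact swap_mem_closure_stepSwaps (hσ x)

theorem image_Bo_eq_Bo_iff (n : ℕ) (σ : Perm (Fin (2*n+2))) :
    σ '' Bo n = Bo n ↔ ∀ x, (σ x : ℕ) % 2 = x % 2 := by
  rw [← Equiv.eq_preimage_iff_image_eq, Set.ext_iff]
  refine forall_congr' fun x => ?_
  simp only [Bo, Set.mem_ofPred_eq, Set.mem_preimage]
  omega

theorem image_Bo_eq_Be_iff (n : ℕ) (σ : Perm (Fin (2*n+2))) :
    σ '' Bo n = Be n ↔ ∀ x, (σ x : ℕ) % 2 ≠ x % 2 := by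
  rw [← Equiv.eq_preimage_iff_image_eq, Set.ext_iff]
  refine forall_congr' fun x => ?_
  simp only [Bo, Be, Set.mem_ofPred_eq, Set.mem_preimage]
  omega

theorem val_finRotate_mod_two_ne (n : ℕ) (x : Fin (2*n+2)) :
    (finRotate (2*n+2) x : ℕ) % 2 ≠ x % 2 := by
  rw [coe_finRotate]
  split_ifs with h
  · simp [h, Fin.last]
  · omega

theorem mem_of_image_Bo_of_stepSwaps_subset {n : ℕ} {G : Subgroup (Perm (Fin (2*n+2)))}
    (hG : stepSwaps (2*n+2) 2 ⊆ G) (hrot : finRotate (2*n+2) ∈ G) {σ : Perm (Fin (2*n+2))}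
    (hσ : σ '' Bo n = Bo n ∨ σ '' Bo n = Be n) : σ ∈ G := by
  have hpres : ∀ τ : Perm (Fin (2*n+2)), (∀ x, (τ x : ℕ) % 2 = x % 2) → τ ∈ G :=
    fun τ hτ => (closure_le G).2 hG (mem_closure_stepSwaps_of_val_mod_eq two_pos hτ)
  rcases hσ with h | h
  · exact hpres σ ((image_Bo_eq_Bo_iff n σ).1 h)
  · refine (mul_mem_cancel_left hrot).1 (hpres _ fun x => ?_)
    have := (image_Bo_eq_Be_iff n σ).1 h x
    have := val_finRotate_mod_two_ne n (σ x)
    simp only [Perm.mul_apply]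
    omega

theorem stmt7 (n : ℕ)
    (W : Subgroup (Equiv.Perm (Fin (2*n+2))))
    (hW : ∀ σ, σ ∈ W ↔ (⇑σ '' Bo n = Bo n ∨ ⇑σ '' Bo n = Be n)) :
    W = Subgroup.closure
      ({τ | ∃ j : ℕ, ∃ h : j < 2*n,
          τ = Equiv.swap (⟨j, by omega⟩ : Fin (2*n+2)) ⟨j+2, by omega⟩}
        ∪ {finRotate (2*n+2)}) := by
  refine le_antisymm (fun σ hσ => ?_) ((closure_le W).2 ?_)
  · exact mem_of_image_Bo_of_stepSwaps_subset
      (fun τ ⟨j, hj, hτ⟩ => subset_closure (Or.inl ⟨j, by omega, hτ⟩))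
      (subset_closure (Or.inr rfl)) ((hW σ).1 hσ)
  · rintro τ (⟨j, hj, rfl⟩ | rfl)
    · exact (hW _).2 (Or.inl ((image_Bo_eq_Bo_iff n _).2
        (val_mod_eq_of_mem_stepSwaps ⟨j, by omega, rfl⟩)))
    · exact (hW _).2 (Or.inr ((image_Bo_eq_Be_iff n _).2 (val_finRotate_mod_two_ne n)))
end

section
/- Let $G$ be a group with elements $h_1, \dots, h_{2n-1}$ and $t$ such that $t$ commutes with $h_j$ for all $j \geq 3$, each $h_i$ commutes with $h_j$ whenever $|i-j| \geq 2$, and $h_i^{-1} h_{i+1}^{-1} h_{i+2}^{-1} h_i h_{i+2} h_{i+1} h_i = h_{i+2}$ for $1 \leq i \leq 2n-3$. Then for $1 \leq i \leq 2n-3$: $(h_{2n-1}\cdots h_2 h_1 t)^{-1} h_i (h_{2n-1}\cdots h_2 h_1 t) = h_{i+2}$. -/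
theorem stmt16 {G : Type*} [Group G] (n : ℕ) (hn : 2 ≤ n) (h : ℕ → G) (t c : G)
    (hc : c = ((List.range (2*n-1)).map (fun i => h (2*n-1-i))).prod * t)
    (hbraid : ∀ i : ℕ, 1 ≤ i → i ≤ 2*n-3 →
      (h i)⁻¹ * (h (i+1))⁻¹ * (h (i+2))⁻¹ * h i * h (i+2) * h (i+1) * h i = h (i+2))
    (hcomm : ∀ i j : ℕ, 1 ≤ i → i + 2 ≤ j → j ≤ 2*n-1 → h i * h j = h j * h i)
    (htcomm : ∀ j : ℕ, 3 ≤ j → j ≤ 2*n-1 → t * h j = h j * t) :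
    ∀ i : ℕ, 1 ≤ i → i ≤ 2*n-3 → c⁻¹ * h i * c = h (i + 2) := by
  set P : ℕ → G := fun m => ((List.range m).map (fun i => h (m-i))).prod with hP
  have Pcons : ∀ m : ℕ, P (m+1) = h (m+1) * P m := by
    intro m
    simp only [hP, List.range_succ_eq_map, List.map_cons, List.map_map, List.prod_cons,
      Nat.sub_zero]
    congr 2
    ext i
    simp [Nat.succ_sub_succ]
  have A : ∀ k j : ℕ, k + 2 ≤ j → j ≤ 2*n-1 → h j * P k = P k * h j := by
    intro k
    induction k with
    | zero => intro j _ _; simp [hP]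
    | succ k ih =>
      intro j hkj hj
      rw [Pcons, ← mul_assoc, ← hcomm (k+1) j (by omega) (by omega) hj, mul_assoc,
        ih j (by omega) hj, mul_assoc]
  have B : ∀ i : ℕ, 1 ≤ i → i ≤ 2*n-3 →
      ∀ m : ℕ, i + 2 ≤ m → m ≤ 2*n-1 → h i * P m = P m * h (i+2) := by
    intro i hi1 hi3
    have key : h i * h (i+2) * h (i+1) * h i = h (i+2) * h (i+1) * h i * h (i+2) := by
      have hb := hbraid i hi1 hi3
      calc h i * h (i+2) * h (i+1) * h i
          = h (i+2) * h (i+1) * h i *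
            ((h i)⁻¹ * (h (i+1))⁻¹ * (h (i+2))⁻¹ * h i * h (i+2) * h (i+1) * h i) := by group
        _ = h (i+2) * h (i+1) * h i * h (i+2) := by rw [hb]
    intro m hm
    induction m, hm using Nat.le_induction with
    | base =>
      intro hle
      obtain ⟨k, rfl⟩ : ∃ k, i = k + 1 := ⟨i - 1, by omega⟩
      set j := k + 1
      have hA : h (j+2) * P k = P k * h (j+2) := A k (j+2) (by omega) (by omega)
      calc h j * P (j+2) = h j * h (j+2) * h (j+1) * h j * P k := by
            rw [show j+2 = (j+1)+1 from rfl, Pcons, Pcons, Pcons]; simp only [j]; group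
        _ = h (j+2) * h (j+1) * h j * h (j+2) * P k := by rw [key]
        _ = h (j+2) * h (j+1) * h j * (h (j+2) * P k) := by group
        _ = h (j+2) * h (j+1) * h j * (P k * h (j+2)) := by rw [hA]
        _ = P (j+2) * h (j+2) := by
            rw [show j+2 = (j+1)+1 from rfl, Pcons, Pcons, Pcons]; simp only [j]; group
    | succ m hm ih =>
      intro hle
      rw [Pcons, ← mul_assoc, hcomm i (m+1) hi1 (by omega) (by omega), mul_assoc,
        ih (by omega), mul_assoc]
  intro i hi1 hi3
  have hB := B i hi1 hi3 (2*n-1) (by omega) le_rfl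
  have ht := htcomm (i+2) (by omega) (by omega)
  have hmain : h i * c = c * h (i+2) := by
    rw [hc]
    calc h i * (P (2*n-1) * t) = (h i * P (2*n-1)) * t := by group
      _ = P (2*n-1) * (h (i+2) * t) := by rw [hB]; group
      _ = P (2*n-1) * (t * h (i+2)) := by rw [ht]
      _ = P (2*n-1) * t * h (i+2) := by group
  rw [mul_assoc, hmain, ← mul_assoc, inv_mul_cancel, one_mul]
end
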